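/- Let N(m) be the number of isomorphism classes of maximal Arrow's single-peaked domains on a set of size m, let P(m) be the number of maximal Arrow's single-peaked domains on a fixed set of size m that contain a fixed linear order as an extremal order, and let SP(m) be the number of isomorphism classes of self-paired maximal Arrow's single-peaked domains on a set of size m. Then N(3) = SP(3) = 1, and for all m ≥ 4: N(m) = (P(m) + SP(m))/2, and consequently P(m)/2 ≤ N(m) ≤ P(m). -/

import Mathlib

/-- A list `l` represents a linear order on the finite set `A`:
it is duplicate-free and its members are exactly the elements of `A`,
listed from most to least preferred. -/
def IsLinOrd {α : Type*} (A : Finset α) (l : List α) : Prop :=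
  l.Nodup ∧ ∀ a : α, a ∈ l ↔ a ∈ A

/-- The restriction of the order `l` to the subset `S`. -/
def restrictList {α : Type*} [DecidableEq α] (l : List α) (S : Finset α) : List α :=
  l.filter (fun a => a ∈ S)

/-- The domain contraction of `D` on `S`: the set of restrictions to `S`
of the orders in `D` (as a set, so duplicates are automatically removed). -/
def contraction {α : Type*} [DecidableEq α] (D : Set (List α)) (S : Finset α) :
    Set (List α) :=
  (fun l => restrictList l S) '' D

/-- `D` contains a Condorcet triple: elements `a, b, c` and orders
`v₁, v₂, v₃ ∈ D` restricting on `{a,b,c}` to `a≻b≻c`, `b≻c≻a`, `c≻a≻b`. -/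
def CondorcetTriple {α : Type*} [DecidableEq α] (D : Set (List α)) : Prop :=
  ∃ a b c : α, a ≠ b ∧ a ≠ c ∧ b ≠ c ∧
    ∃ v₁ ∈ D, ∃ v₂ ∈ D, ∃ v₃ ∈ D,
      restrictList v₁ {a, b, c} = [a, b, c] ∧
      restrictList v₂ {a, b, c} = [b, c, a] ∧
      restrictList v₃ {a, b, c} = [c, a, b]

/-- A Condorcet domain on `A`: a set of linear orders on `A` with no Condorcet triple. -/
def IsCondorcetDomain {α : Type*} [DecidableEq α] (A : Finset α) (D : Set (List α)) : Prop :=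
  (∀ l ∈ D, IsLinOrd A l) ∧ ¬ CondorcetTriple D

/-- A maximal Condorcet domain on `A`: no strict superset is a Condorcet domain on `A`. -/
def IsMaxCondorcetDomain {α : Type*} [DecidableEq α] (A : Finset α) (D : Set (List α)) : Prop :=
  IsCondorcetDomain A D ∧ ∀ D' : Set (List α), IsCondorcetDomain A D' → D ⊆ D' → D' = D

/-- `x` is a never-bottom element of the triple `T` for `D`:
no order of `D` ranks `x` below both other elements of `T`. -/
def NeverBottom {α : Type*} [DecidableEq α] (D : Set (List α)) (T : Finset α) (x : α) : Prop :=
  x ∈ T ∧ ∀ l ∈ D, (restrictList l T).getLast? ≠ some x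

/-- An Arrow's single-peaked domain on `A`: a Condorcet domain such that every
3-element subset of `A` has a never-bottom element. -/
def IsArrowSP {α : Type*} [DecidableEq α] (A : Finset α) (D : Set (List α)) : Prop :=
  IsCondorcetDomain A D ∧
    ∀ T : Finset α, T ⊆ A → T.card = 3 → ∃ x : α, NeverBottom D T x

/-- A maximal Arrow's single-peaked domain on `A`. -/
def IsMaxArrowSP {α : Type*} [DecidableEq α] (A : Finset α) (D : Set (List α)) : Prop :=
  IsMaxCondorcetDomain A D ∧ IsArrowSP A D

/-- `a` is a terminal element of `D`: some order of `D` ends with (least element) `a`. -/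
def TerminalElt {α : Type*} (D : Set (List α)) (a : α) : Prop :=
  ∃ l ∈ D, l.getLast? = some a

/-- `l` is an extremal order of `D`: `l ∈ D`, and the first and last elements of `l`
are the two terminal elements of `D`. -/
def IsExtremal {α : Type*} (D : Set (List α)) (l : List α) : Prop :=
  l ∈ D ∧ ∃ s t : α, s ≠ t ∧ l.head? = some s ∧ l.getLast? = some t ∧
    TerminalElt D s ∧ TerminalElt D t ∧ ∀ a : α, TerminalElt D a → a = s ∨ a = t

/-- The position of `a` in the order `l`, the first element being in position 1. -/
def posIn {α : Type*} [DecidableEq α] (l : List α) (a : α) : ℕ :=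
  l.idxOf a + 1

/-- `numMaxASP m` is the number of maximal Arrow's single-peaked domains on a fixed
set of size `m` containing a fixed linear order (`0 < 1 < ⋯ < m-1` on `Fin m`) as an
extremal order. -/
noncomputable def numMaxASP (m : ℕ) : ℕ :=
  {D : Set (List (Fin m)) | IsMaxArrowSP Finset.univ D ∧
    IsExtremal D (List.finRange m)}.ncard

/-- `D` is self-paired: its inherited permutation (the permutation sending one of its
two extremal orders to the other) maps `D` onto itself. -/
def SelfPaired {α : Type*} [DecidableEq α] (D : Set (List α)) : Prop :=
  ∃ (P Q : List α) (θ : Equiv.Perm α), P ≠ Q ∧ IsExtremal D P ∧ IsExtremal D Q ∧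
    (∀ l : List α, IsExtremal D l → l = P ∨ l = Q) ∧ P.map θ = Q ∧
    (fun l : List α => l.map θ) '' D = D

/-- `numIsoClasses m`: the number of isomorphism classes of maximal Arrow's
single-peaked domains on a set of size `m`. -/
noncomputable def numIsoClasses (m : ℕ) : ℕ :=
  {C : Set (Set (List (Fin m))) | ∃ D : Set (List (Fin m)),
    IsMaxArrowSP Finset.univ D ∧
    C = {D' | ∃ φ : Equiv.Perm (Fin m), (fun l : List (Fin m) => l.map φ) '' D = D'}}.ncard

/-- `numSPClasses m`: the number of isomorphism classes of self-paired maximal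
Arrow's single-peaked domains on a set of size `m`. -/
noncomputable def numSPClasses (m : ℕ) : ℕ :=
  {C : Set (Set (List (Fin m))) | ∃ D : Set (List (Fin m)),
    IsMaxArrowSP Finset.univ D ∧ SelfPaired D ∧
    C = {D' | ∃ φ : Equiv.Perm (Fin m), (fun l : List (Fin m) => l.map φ) '' D = D'}}.ncard


/-!
A maximal Arrow's single-peaked domain `D` on at least two alternatives has exactly two terminal
elements: maximality forbids a single one, and three would all be bottom on the triple they form.
For each terminal element `s` exactly one order of `D` starts with `s`. Existence is by induction,
deleting the other terminal element; uniqueness holds because two such orders that differ on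
`{x, y}` would make `s`, `x`, `y` all bottom on `{s, x, y}`. Hence `D` has exactly two extremal
orders `P ≠ Q`.

Permutations act on domains, and the isomorphism class of `D` meets the domains with extremal
order `e` exactly in `φ • D` and `ψ • D`, where `φ • P = e = ψ • Q`. These coincide iff `ψ⁻¹ * φ`,
which maps `P` to `Q`, preserves `D`, i.e. iff `D` is self-paired. Counting the domains with
extremal order `e` class by class gives `P(m) + SP(m) = 2 N(m)`, and `SP(m) ≤ N(m)`. On three
alternatives every maximal Arrow's single-peaked domain consists of the orders that do not rank a
given element last; these domains are all isomorphic and self-paired.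
-/

open Finset Pointwise

section LinearOrders

variable {α : Type*} {A : Finset α} {D : Set (List α)} {l l' : List α} {a : α}

lemma IsLinOrd.perm (h : IsLinOrd A l) (hp : l.Perm l') : IsLinOrd A l' :=
  ⟨hp.nodup_iff.1 h.1, fun a => hp.mem_iff.symm.trans (h.2 a)⟩

lemma IsLinOrd.perm_of_isLinOrd (h : IsLinOrd A l) (h' : IsLinOrd A l') : l.Perm l' :=
  (List.perm_ext_iff_of_nodup h.1 h'.1).2 fun a => (h.2 a).trans (h'.2 a).symm

lemma IsLinOrd.reverse (h : IsLinOrd A l) : IsLinOrd A l.reverse :=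
  h.perm (List.reverse_perm l).symm

lemma IsLinOrd.ne_nil (h : IsLinOrd A l) (hA : A.Nonempty) : l ≠ [] := by
  rintro rfl
  obtain ⟨a, ha⟩ := hA
  simpa using (h.2 a).2 ha

lemma IsLinOrd.mem_of_univ [Fintype α] (h : IsLinOrd univ l) (a : α) : a ∈ l :=
  (h.2 a).2 (mem_univ a)

lemma TerminalElt.mem (hD : ∀ l ∈ D, IsLinOrd A l) (h : TerminalElt D a) : a ∈ A :=
  let ⟨l, hl, e⟩ := h
  ((hD l hl).2 a).1 (List.mem_of_getLast? e)

end LinearOrders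

section Restriction

variable {α : Type*} [DecidableEq α]

lemma mem_restrictList {l : List α} {S : Finset α} {a : α} :
    a ∈ restrictList l S ↔ a ∈ l ∧ a ∈ S := by
  simp [restrictList]

lemma restrictList_cons_of_mem {a : α} {S : Finset α} (l : List α) (h : a ∈ S) :
    restrictList (a :: l) S = a :: restrictList l S :=
  List.filter_cons_of_pos (by simpa using h)

lemma restrictList_cons_of_notMem {a : α} {S : Finset α} (l : List α) (h : a ∉ S) :
    restrictList (a :: l) S = restrictList l S :=
  List.filter_cons_of_neg (by simpa using h)

lemma getLast?_restrictList {l : List α} {S : Finset α} {x : α}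
    (h : l.getLast? = some x) (hx : x ∈ S) : (restrictList l S).getLast? = some x := by
  obtain ⟨l, rfl⟩ := List.getLast?_eq_some_iff.1 h
  simp [restrictList, List.filter_append, hx]

lemma head?_restrictList {l : List α} {S : Finset α} {x : α}
    (h : l.head? = some x) (hx : x ∈ S) : (restrictList l S).head? = some x := by
  obtain ⟨l, rfl⟩ := List.head?_eq_some_iff.1 h
  simp [restrictList_cons_of_mem l hx]

lemma restrictList_congr {l : List α} {S S' : Finset α} (h : ∀ x ∈ l, x ∈ S ↔ x ∈ S') :
    restrictList l S = restrictList l S' :=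
  List.filter_congr fun x hx => by simp [h x hx]

lemma restrictList_erase_of_notMem {l : List α} (hl : l.Nodup) {f : α} {S : Finset α}
    (hf : f ∉ S) : restrictList (l.erase f) S = restrictList l S := by
  rw [hl.erase_eq_filter, restrictList, List.filter_filter]
  exact List.filter_congr fun x _ => by
    by_cases hx : x ∈ S
    · simp [hx, ne_of_mem_of_not_mem hx hf]
    · simp [hx]

lemma restrictList_append_singleton_of_notMem (l : List α) {f : α} {S : Finset α} (hf : f ∉ S) :
    restrictList (l ++ [f]) S = restrictList l S := by
  simp [restrictList, List.filter_append, hf]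

lemma restrictList_univ [Fintype α] (l : List α) : restrictList l univ = l :=
  List.filter_eq_self.2 fun _ _ => by simp

lemma restrictList_cons_pair {a b : α} {l : List α} (hl : (a :: l).Nodup) (hb : b ∈ l) :
    restrictList (a :: l) {a, b} = [a, b] := by
  have ha : a ∉ l := (List.nodup_cons.1 hl).1
  rw [restrictList_cons_of_mem l (by simp), restrictList_congr (S' := {b}) fun x hx => by
    simp [ne_of_mem_of_not_mem hx ha]]
  simp [restrictList, List.filter_eq, List.count_eq_one_of_mem (List.nodup_cons.1 hl).2 hb]

lemma exists_restrictList_pair_swap {l l' : List α} (hl : l.Nodup) (hp : l.Perm l') (hne : l ≠ l') :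
    ∃ x y, restrictList l {x, y} = [x, y] ∧ restrictList l' {x, y} = [y, x] := by
  induction l generalizing l' with
  | nil => exact absurd (List.Perm.nil_eq hp) hne
  | cons a t ih =>
    rcases l' with _ | ⟨b, t'⟩
    · exact absurd hp.length_eq (by simp)
    have hl' : (b :: t').Nodup := hp.nodup_iff.1 hl
    by_cases hab : a = b
    · subst hab
      obtain ⟨x, y, hxy, hyx⟩ := ih (List.nodup_cons.1 hl).2 (List.Perm.cons_inv hp)
        (fun h => hne (h ▸ rfl))
      have hx : x ∈ t := (mem_restrictList.1 (show x ∈ restrictList t {x, y} by simp [hxy])).1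
      have hy : y ∈ t := (mem_restrictList.1 (show y ∈ restrictList t {x, y} by simp [hxy])).1
      have hat : a ∉ t := (List.nodup_cons.1 hl).1
      have haxy : a ∉ ({x, y} : Finset α) := by
        simp only [mem_insert, mem_singleton, not_or]
        exact ⟨fun h => hat (h ▸ hx), fun h => hat (h ▸ hy)⟩
      exact ⟨x, y, by rwa [restrictList_cons_of_notMem t haxy],
        by rwa [restrictList_cons_of_notMem t' haxy]⟩
    · have hb : b ∈ t :=
        (List.mem_cons.1 (hp.mem_iff.2 List.mem_cons_self)).resolve_left (Ne.symm hab)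
      have ha : a ∈ t' := (List.mem_cons.1 (hp.mem_iff.1 List.mem_cons_self)).resolve_left hab
      refine ⟨a, b, restrictList_cons_pair hl hb, ?_⟩
      rw [pair_comm]
      exact restrictList_cons_pair hl' ha

lemma IsLinOrd.length_eq {A : Finset α} {l : List α} (h : IsLinOrd A l) : l.length = #A := by
  rw [← List.toFinset_card_of_nodup h.1]
  congr 1
  ext a
  simp [h.2 a]

lemma IsLinOrd.erase {A : Finset α} {l : List α} (h : IsLinOrd A l) (f : α) :
    IsLinOrd (A.erase f) (l.erase f) :=
  ⟨h.1.erase f, fun x => by rw [h.1.mem_erase_iff, mem_erase, h.2]⟩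

end Restriction

section CondorcetCycle

variable {α : Type*} [DecidableEq α] {D D' : Set (List α)} {a b c : α}

def IsCondorcetCycle (D : Set (List α)) (a b c : α) : Prop :=
  a ≠ b ∧ a ≠ c ∧ b ≠ c ∧ [a, b, c] ∈ contraction D {a, b, c} ∧
    [b, c, a] ∈ contraction D {a, b, c} ∧ [c, a, b] ∈ contraction D {a, b, c}

lemma condorcetTriple_iff : CondorcetTriple D ↔ ∃ a b c, IsCondorcetCycle D a b c := by
  simp only [CondorcetTriple, IsCondorcetCycle, contraction, Set.mem_image]
  constructor
  · rintro ⟨a, b, c, hab, hac, hbc, v₁, h₁, v₂, h₂, v₃, h₃, e₁, e₂, e₃⟩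
    exact ⟨a, b, c, hab, hac, hbc, ⟨v₁, h₁, e₁⟩, ⟨v₂, h₂, e₂⟩, ⟨v₃, h₃, e₃⟩⟩
  · rintro ⟨a, b, c, hab, hac, hbc, ⟨v₁, h₁, e₁⟩, ⟨v₂, h₂, e₂⟩, ⟨v₃, h₃, e₃⟩⟩
    exact ⟨a, b, c, hab, hac, hbc, v₁, h₁, v₂, h₂, v₃, h₃, e₁, e₂, e₃⟩

lemma IsCondorcetCycle.rotate (h : IsCondorcetCycle D a b c) : IsCondorcetCycle D b c a := by
  obtain ⟨hab, hac, hbc, h₁, h₂, h₃⟩ := h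
  have hT : ({b, c, a} : Finset α) = {a, b, c} := by
    ext
    simp only [mem_insert, mem_singleton]
    tauto
  exact ⟨hbc, hab.symm, hac.symm, hT ▸ h₂, hT ▸ h₃, hT ▸ h₁⟩

lemma IsCondorcetCycle.exists_of_mem {x : α} (h : IsCondorcetCycle D a b c)
    (hx : x ∈ ({a, b, c} : Finset α)) : ∃ y z, IsCondorcetCycle D x y z := by
  simp only [mem_insert, mem_singleton] at hx
  rcases hx with rfl | rfl | rfl
  exacts [⟨b, c, h⟩, ⟨c, a, h.rotate⟩, ⟨a, b, h.rotate.rotate⟩]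

lemma IsCondorcetCycle.mono (h : IsCondorcetCycle D a b c)
    (hDD' : contraction D {a, b, c} ⊆ contraction D' {a, b, c}) : IsCondorcetCycle D' a b c :=
  let ⟨hab, hac, hbc, h₁, h₂, h₃⟩ := h
  ⟨hab, hac, hbc, hDD' h₁, hDD' h₂, hDD' h₃⟩

lemma IsCondorcetCycle.mem_of_isLinOrd {A : Finset α} (h : IsCondorcetCycle D a b c)
    (hD : ∀ l ∈ D, IsLinOrd A l) : a ∈ A ∧ b ∈ A ∧ c ∈ A := by
  obtain ⟨-, -, -, ⟨l, hl, e : restrictList l {a, b, c} = [a, b, c]⟩, -⟩ := h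
  have hmem : ∀ x ∈ [a, b, c], x ∈ A := fun x hx =>
    ((hD l hl).2 x).1 (mem_restrictList.1 (e ▸ hx)).1
  simpa using hmem

end CondorcetCycle

section ArrowSP

variable {α : Type*} [DecidableEq α] {A : Finset α} {D : Set (List α)} {l l' : List α}
  {a b c s : α}

lemma IsMaxArrowSP.isLinOrd (hD : IsMaxArrowSP A D) : ∀ l ∈ D, IsLinOrd A l :=
  hD.1.1.1

lemma IsLinOrd.getLast?_ne_of_head? (h : IsLinOrd A l) (hA : 2 ≤ #A) (hs : l.head? = some s) :
    l.getLast? ≠ some s := by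
  obtain ⟨t, rfl⟩ := List.head?_eq_some_iff.1 hs
  have ht : t ≠ [] := by
    rintro rfl
    have := h.length_eq
    rw [List.length_singleton] at this
    omega
  rw [List.getLast?_cons, List.getLast?_eq_some_getLast ht]
  exact fun he => (List.nodup_cons.1 h.1).1 (Option.some_injective _ he ▸ List.getLast_mem ht)

lemma TerminalElt.exists_getLast?_restrictList {T : Finset α} (h : TerminalElt D a)
    (ha : a ∈ T) : ∃ l ∈ D, (restrictList l T).getLast? = some a :=
  let ⟨l, hl, e⟩ := h
  ⟨l, hl, getLast?_restrictList e ha⟩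

lemma IsArrowSP.false_of_forall_bottom (hD : IsArrowSP A D) (ha : a ∈ A) (hb : b ∈ A)
    (hc : c ∈ A) (hab : a ≠ b) (hac : a ≠ c) (hbc : b ≠ c)
    (hbot : ∀ x ∈ ({a, b, c} : Finset α), ∃ l ∈ D, (restrictList l {a, b, c}).getLast? = some x) :
    False := by
  obtain ⟨x, hx, hnb⟩ := hD.2 {a, b, c} (by simp [insert_subset_iff, ha, hb, hc])
    (card_eq_three.2 ⟨a, b, c, hab, hac, hbc, rfl⟩)
  obtain ⟨l, hl, e⟩ := hbot x hx
  exact hnb l hl e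

lemma IsArrowSP.eq_or_eq_of_terminalElt (hD : IsArrowSP A D) (hab : a ≠ b)
    (ha : TerminalElt D a) (hb : TerminalElt D b) (hc : TerminalElt D c) : c = a ∨ c = b := by
  by_contra! h
  have hlin := hD.1.1
  refine hD.false_of_forall_bottom (ha.mem hlin) (hb.mem hlin) (hc.mem hlin) hab h.1.symm
    h.2.symm ?_
  simp only [mem_insert, mem_singleton, forall_eq_or_imp, forall_eq]
  exact ⟨ha.exists_getLast?_restrictList (by simp), hb.exists_getLast?_restrictList (by simp),
    hc.exists_getLast?_restrictList (by simp)⟩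

lemma IsArrowSP.eq_of_head?_eq (hD : IsArrowSP A D) (hs : TerminalElt D s) (hl : l ∈ D)
    (hl' : l' ∈ D) (h : l.head? = some s) (h' : l'.head? = some s) : l = l' := by
  obtain ⟨t, rfl⟩ := List.head?_eq_some_iff.1 h
  obtain ⟨t', rfl⟩ := List.head?_eq_some_iff.1 h'
  by_contra hne
  have hlin := hD.1.1
  have hst := List.nodup_cons.1 (hlin _ hl).1
  have hst' := List.nodup_cons.1 (hlin _ hl').1
  obtain ⟨x, y, hxy, hyx⟩ := exists_restrictList_pair_swap hst.2
    (List.Perm.cons_inv ((hlin _ hl).perm_of_isLinOrd (hlin _ hl'))) (fun e => hne (e ▸ rfl))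
  have hx : x ∈ t := (mem_restrictList.1 (show x ∈ restrictList t {x, y} by simp [hxy])).1
  have hy : y ∈ t := (mem_restrictList.1 (show y ∈ restrictList t {x, y} by simp [hxy])).1
  have hxs : x ≠ s := fun e => hst.1 (e ▸ hx)
  have hys : y ≠ s := fun e => hst.1 (e ▸ hy)
  have hxy' : x ≠ y := by
    have : [x, y].Nodup := hxy ▸ hst.2.filter _
    simpa using this
  have hrestr : ∀ {u : List α} {p q : α}, s ∉ u → restrictList u {x, y} = [p, q] →
      (restrictList (s :: u) {s, x, y}).getLast? = some q := fun hsu e => by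
    rw [restrictList_cons_of_mem _ (by simp), restrictList_congr (S' := {x, y}) fun z hz => by
      simp [ne_of_mem_of_not_mem hz hsu], e]
    rfl
  have hlinA := fun z (hz : z ∈ t) => ((hlin _ hl).2 z).1 (List.mem_cons_of_mem s hz)
  refine hD.false_of_forall_bottom (hs.mem hlin) (hlinA x hx) (hlinA y hy) hxs.symm hys.symm hxy' ?_
  simp only [mem_insert, mem_singleton, forall_eq_or_imp, forall_eq]
  exact ⟨hs.exists_getLast?_restrictList (by simp), ⟨_, hl', hrestr hst'.1 hyx⟩,
    ⟨_, hl, hrestr hst.1 hxy⟩⟩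

lemma IsArrowSP.isExtremal_of_head?_eq (hD : IsArrowSP A D) (hA : 2 ≤ #A)
    (hs : TerminalElt D s) (hl : l ∈ D) (h : l.head? = some s) : IsExtremal D l := by
  have hne : l ≠ [] := by rintro rfl; simp at h
  have e := List.getLast?_eq_some_getLast hne
  have hst : s ≠ l.getLast hne := fun hst => (hD.1.1 l hl).getLast?_ne_of_head? hA h (hst ▸ e)
  have ht : TerminalElt D (l.getLast hne) := ⟨l, hl, e⟩
  exact ⟨hl, s, _, hst, h, e, hs, ht, fun a ha => hD.eq_or_eq_of_terminalElt hst hs ht ha⟩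

lemma IsArrowSP.eq_or_eq_of_isExtremal {P Q : List α} (hD : IsArrowSP A D) (hP : IsExtremal D P)
    (hQ : IsExtremal D Q) (hPQ : P ≠ Q) (hl : IsExtremal D l) : l = P ∨ l = Q := by
  obtain ⟨hPD, p, -, -, hp, -, hpT, -⟩ := hP
  obtain ⟨hQD, q, -, -, hq, -, hqT, -⟩ := hQ
  obtain ⟨hlD, r, -, -, hr, -, hrT, -⟩ := hl
  have hpq : p ≠ q := fun e => hPQ (hD.eq_of_head?_eq hpT hPD hQD hp (e ▸ hq))
  rcases hD.eq_or_eq_of_terminalElt hpq hpT hqT hrT with rfl | rfl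
  exacts [.inl (hD.eq_of_head?_eq hrT hlD hPD hr hp), .inr (hD.eq_of_head?_eq hrT hlD hQD hr hq)]

end ArrowSP

section Maximal

variable {α : Type*} [DecidableEq α] {A : Finset α} {D : Set (List α)} {n : List α}

lemma not_condorcetTriple_of_card_lt_three (hD : ∀ l ∈ D, IsLinOrd A l) (hA : #A < 3) :
    ¬CondorcetTriple D := by
  rw [condorcetTriple_iff]
  rintro ⟨a, b, c, hc⟩
  obtain ⟨ha, hb, hc'⟩ := hc.mem_of_isLinOrd hD
  have := card_le_card (s := {a, b, c}) (t := A) (by simp [insert_subset_iff, ha, hb, hc'])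
  rw [card_eq_three.2 ⟨a, b, c, hc.1, hc.2.1, hc.2.2.1, rfl⟩] at this
  omega

lemma IsMaxCondorcetDomain.mem_of_not_condorcetTriple_insert (hD : IsMaxCondorcetDomain A D)
    (hn : IsLinOrd A n) (h : ¬CondorcetTriple (insert n D)) : n ∈ D := by
  rw [← hD.2 _ ⟨Set.forall_mem_insert.2 ⟨hn, hD.1.1⟩, h⟩ (Set.subset_insert n D)]
  exact Set.mem_insert n D

lemma IsMaxCondorcetDomain.nonempty (hD : IsMaxCondorcetDomain A D) : D.Nonempty := by
  rw [Set.nonempty_iff_ne_empty]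
  rintro rfl
  refine Set.notMem_empty _ (hD.mem_of_not_condorcetTriple_insert (n := A.toList)
    ⟨A.nodup_toList, by simp⟩ ?_)
  rintro ⟨a, b, c, hab, -, -, v₁, h₁, v₂, h₂, -, -, e₁, e₂, -⟩
  simp only [insert_empty_eq, Set.mem_singleton_iff] at h₁ h₂
  subst h₁ h₂
  exact hab (List.cons.inj (e₁.symm.trans e₂)).1

/-- If every order of `D` ranked `a` last, moving `a` to the top of one of them would create no
Condorcet triple: on triples through `a` the element `a` is never in the middle. -/
lemma IsMaxCondorcetDomain.exists_getLast?_ne (hD : IsMaxCondorcetDomain A D) (hA : 2 ≤ #A)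
    (a : α) : ∃ l ∈ D, l.getLast? ≠ some a := by
  by_contra! hall
  obtain ⟨l₀, hl₀⟩ := hD.nonempty
  have hal₀ : a ∈ l₀ := List.mem_of_getLast? (hall l₀ hl₀)
  have hnd := (hD.1.1 l₀ hl₀).1
  have hn : IsLinOrd A (a :: l₀.erase a) := by
    refine ⟨List.nodup_cons.2 ⟨hnd.not_mem_erase, hnd.erase a⟩, fun x => ?_⟩
    rw [← (hD.1.1 l₀ hl₀).2, List.mem_cons, hnd.mem_erase_iff]
    by_cases hx : x = a <;> simp [hx, hal₀]
  refine hn.getLast?_ne_of_head? hA rfl (hall _ (hD.mem_of_not_condorcetTriple_insert hn ?_))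
  rw [condorcetTriple_iff]
  rintro ⟨x, y, z, hc⟩
  by_cases ha : a ∈ ({x, y, z} : Finset α)
  · obtain ⟨y, z, hay, haz, -, -, -, ⟨v, hv, e : restrictList v {a, y, z} = [z, a, y]⟩⟩ :=
      hc.exists_of_mem ha
    rcases hv with hv | hv
    · rw [hv] at e
      simpa [e, Ne.symm haz] using
        head?_restrictList (l := a :: l₀.erase a) (S := {a, y, z}) rfl (by simp)
    · simpa [e, Ne.symm hay] using getLast?_restrictList (S := {a, y, z}) (hall v hv) (by simp)
  · refine hD.1.2 (condorcetTriple_iff.2 ⟨x, y, z, hc.mono ?_⟩)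
    rintro _ ⟨v, hv | hv, rfl⟩
    · subst hv
      exact ⟨l₀, hl₀,
        by simp [restrictList_cons_of_notMem _ ha, restrictList_erase_of_notMem hnd ha]⟩
    · exact ⟨v, hv, rfl⟩

lemma IsMaxCondorcetDomain.exists_two_terminals (hD : IsMaxCondorcetDomain A D) (hA : 2 ≤ #A) :
    ∃ a b, a ≠ b ∧ TerminalElt D a ∧ TerminalElt D b := by
  have hAne : A.Nonempty := card_pos.1 (by omega)
  obtain ⟨l₀, hl₀⟩ := hD.nonempty
  have hne₀ := (hD.1.1 l₀ hl₀).ne_nil hAne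
  obtain ⟨l, hl, hla⟩ := hD.exists_getLast?_ne hA (l₀.getLast hne₀)
  have hne := (hD.1.1 l hl).ne_nil hAne
  refine ⟨l₀.getLast hne₀, l.getLast hne, fun e => hla (e ▸ List.getLast?_eq_some_getLast hne),
    ⟨l₀, hl₀, List.getLast?_eq_some_getLast hne₀⟩, ⟨l, hl, List.getLast?_eq_some_getLast hne⟩⟩

end Maximal

section Erase

variable {α : Type*} [DecidableEq α] {A : Finset α} {D : Set (List α)} {f s : α}

lemma contraction_image_erase (hD : ∀ l ∈ D, l.Nodup) {T : Finset α} (hf : f ∉ T) :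
    contraction ((·.erase f) '' D) T = contraction D T := by
  rw [contraction, contraction, Set.image_image]
  exact Set.image_congr fun l hl => restrictList_erase_of_notMem (hD l hl) hf

lemma TerminalElt.image_erase (h : TerminalElt D s) (hfs : f ≠ s) :
    TerminalElt ((·.erase f) '' D) s := by
  obtain ⟨l, hl, e⟩ := h
  obtain ⟨l, rfl⟩ := List.getLast?_eq_some_iff.1 e
  refine ⟨_, ⟨_, hl, rfl⟩, ?_⟩
  show ((l ++ [s]).erase f).getLast? = some s
  rw [List.erase_append]
  split <;> simp [hfs.symm]

lemma IsArrowSP.image_erase (hD : IsArrowSP A D) (f : α) :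
    IsArrowSP (A.erase f) ((·.erase f) '' D) := by
  have hlin : ∀ v ∈ (·.erase f) '' D, IsLinOrd (A.erase f) v := by
    rintro _ ⟨l, hl, rfl⟩
    exact (hD.1.1 l hl).erase f
  have hnd : ∀ l ∈ D, l.Nodup := fun l hl => (hD.1.1 l hl).1
  refine ⟨⟨hlin, fun hCT => ?_⟩, fun T hT hT3 => ?_⟩
  · obtain ⟨a, b, c, hc⟩ := condorcetTriple_iff.1 hCT
    have hf : f ∉ ({a, b, c} : Finset α) := by
      have := hc.mem_of_isLinOrd hlin
      simp only [mem_erase] at this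
      simp [Ne.symm this.1.1, Ne.symm this.2.1.1, Ne.symm this.2.2.1]
    exact hD.1.2 (condorcetTriple_iff.2 ⟨a, b, c, hc.mono (contraction_image_erase hnd hf).le⟩)
  · have hf : f ∉ T := fun h => by simpa using hT h
    obtain ⟨x, hx, hnb⟩ := hD.2 T (hT.trans (erase_subset f A)) hT3
    refine ⟨x, hx, ?_⟩
    rintro _ ⟨l, hl, rfl⟩
    rw [restrictList_erase_of_notMem (hnd l hl) hf]
    exact hnb l hl

/-- An order `w` of a Condorcet domain containing the contraction is the contraction of
`w ++ [f]`, which maximality puts in `D`: a Condorcet triple through `f` would make all three of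
its elements bottom, as `f` is terminal. -/
lemma IsMaxArrowSP.image_erase (hD : IsMaxArrowSP A D) (hf : TerminalElt D f) :
    IsMaxArrowSP (A.erase f) ((·.erase f) '' D) := by
  have hSP := hD.2.image_erase f
  refine ⟨⟨hSP.1, fun D' hD' hsub => Set.Subset.antisymm (fun w hw => ?_) hsub⟩, hSP⟩
  have hwlin := hD'.1 w hw
  have hfw : f ∉ w := fun h => by simpa using (hwlin.2 f).1 h
  have hfA : f ∈ A := hf.mem hD.isLinOrd
  have hn : IsLinOrd A (w ++ [f]) := by
    refine ⟨by simpa using (List.nodup_concat w f).2 ⟨hfw, hwlin.1⟩, fun x => ?_⟩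
    by_cases hx : x = f <;> simp [hx, hfA, hwlin.2]
  suffices w ++ [f] ∈ D from ⟨_, this, by simp [List.erase_append_right _ hfw]⟩
  refine hD.1.mem_of_not_condorcetTriple_insert hn fun hCT => ?_
  obtain ⟨x, y, z, hc⟩ := condorcetTriple_iff.1 hCT
  by_cases hfT : f ∈ ({x, y, z} : Finset α)
  · obtain ⟨y, z, hc⟩ := hc.exists_of_mem hfT
    obtain ⟨-, hyA, hzA⟩ := hc.mem_of_isLinOrd (Set.forall_mem_insert.2 ⟨hn, hD.isLinOrd⟩)
    obtain ⟨hfy, hfz, hyz, ⟨v₁, hv₁, e₁⟩, -, ⟨v₃, hv₃, e₃⟩⟩ := hc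
    have hmemD : ∀ v ∈ insert (w ++ [f]) D, ∀ p q r, restrictList v {f, y, z} = [p, q, r] →
        r ≠ f → v ∈ D := by
      rintro v (rfl | hv) p q r e hr
      · have := getLast?_restrictList (l := w ++ [f]) (S := {f, y, z}) List.getLast?_concat
          (mem_insert_self f _)
        simp [e, hr] at this
      · exact hv
    refine hD.2.false_of_forall_bottom hfA hyA hzA hfy hfz hyz ?_
    simp only [mem_insert, mem_singleton, forall_eq_or_imp, forall_eq]
    exact ⟨hf.exists_getLast?_restrictList (by simp),
      ⟨v₃, hmemD v₃ hv₃ _ _ _ e₃ (Ne.symm hfy), by simp [e₃]⟩,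
      ⟨v₁, hmemD v₁ hv₁ _ _ _ e₁ (Ne.symm hfz), by simp [e₁]⟩⟩
  · refine hD'.2 (condorcetTriple_iff.2 ⟨x, y, z, hc.mono ?_⟩)
    rintro _ ⟨v, rfl | hv, rfl⟩
    · exact ⟨w, hw, (restrictList_append_singleton_of_notMem w hfT).symm⟩
    · exact ⟨v.erase f, hsub ⟨v, hv, rfl⟩, restrictList_erase_of_notMem (hD.isLinOrd v hv).1 hfT⟩

end Erase

section Extremal

variable {α : Type*} [DecidableEq α] {A : Finset α} {D : Set (List α)} {s : α}

/-- In the inductive step, an order whose contraction (deleting the other terminal element `f`)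
starts with `s` cannot start with `f`: its last element would be a third terminal element. -/
lemma IsMaxArrowSP.exists_head?_eq (hD : IsMaxArrowSP A D) (hA : 2 ≤ #A)
    (hs : TerminalElt D s) : ∃ l ∈ D, l.head? = some s := by
  obtain ⟨k, hk⟩ : ∃ k, #A = k + 2 := ⟨#A - 2, by omega⟩
  clear hA
  induction k generalizing A D with
  | zero =>
    obtain ⟨l, hl, e⟩ := hs
    have hrev := (hD.isLinOrd l hl).reverse
    refine ⟨l.reverse, hD.1.mem_of_not_condorcetTriple_insert hrev ?_, by rwa [List.head?_reverse]⟩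
    exact not_condorcetTriple_of_card_lt_three (Set.forall_mem_insert.2 ⟨hrev, hD.isLinOrd⟩)
      (by omega)
  | succ k ih =>
    obtain ⟨a, b, hab, ha, hb⟩ := hD.1.exists_two_terminals (by omega)
    obtain ⟨f, hfs, hf⟩ : ∃ f, f ≠ s ∧ TerminalElt D f := by
      rcases hD.2.eq_or_eq_of_terminalElt hab ha hb hs with rfl | rfl
      exacts [⟨b, hab.symm, hb⟩, ⟨a, hab, ha⟩]
    have hD' := hD.image_erase hf
    have hA' : #(A.erase f) = k + 2 := by rw [card_erase_of_mem (hf.mem hD.isLinOrd)]; omega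
    obtain ⟨_, ⟨l, hl, rfl⟩, hls⟩ := ih hD' (hs.image_erase hfs) hA'
    obtain ⟨g, t, rfl⟩ :=
      List.exists_cons_of_ne_nil ((hD.isLinOrd _ hl).ne_nil (card_pos.1 (by omega)))
    replace hls : ((g :: t).erase f).head? = some s := hls
    by_cases hg : g = f
    · subst hg
      rw [List.erase_cons_head] at hls
      have hft : g ∉ t := (List.nodup_cons.1 (hD.isLinOrd _ hl).1).1
      have hlin : IsLinOrd (A.erase g) t := hD'.isLinOrd t ⟨_, hl, List.erase_cons_head g t⟩
      have hne : t ≠ [] := by rintro rfl; simp at hls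
      have ht : TerminalElt D (t.getLast hne) :=
        ⟨_, hl, by rw [List.getLast?_cons, List.getLast?_eq_some_getLast hne]; rfl⟩
      rcases hD.2.eq_or_eq_of_terminalElt hfs hf hs ht with h | h
      · exact absurd (h ▸ List.getLast_mem hne) hft
      · exact absurd (h ▸ List.getLast?_eq_some_getLast hne)
          (hlin.getLast?_ne_of_head? (by omega) hls)
    · refine ⟨_, hl, ?_⟩
      rwa [List.erase_cons_tail (by simpa using hg)] at hls

lemma IsMaxArrowSP.exists_isExtremal_pair (hD : IsMaxArrowSP A D) (hA : 2 ≤ #A) :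
    ∃ P Q, P ≠ Q ∧ IsExtremal D P ∧ IsExtremal D Q := by
  obtain ⟨a, b, hab, ha, hb⟩ := hD.1.exists_two_terminals hA
  obtain ⟨P, hP, hPa⟩ := hD.exists_head?_eq hA ha
  obtain ⟨Q, hQ, hQb⟩ := hD.exists_head?_eq hA hb
  exact ⟨P, Q, fun e => hab (Option.some_injective _ (hPa.symm.trans (e ▸ hQb))),
    hD.2.isExtremal_of_head?_eq hA ha hP hPa, hD.2.isExtremal_of_head?_eq hA hb hQ hQb⟩

end Extremal

section Relabelling

variable {α : Type*}

/-- A permutation acts on orders elementwise, hence pointwise on domains by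
`φ • D = (fun l => l.map φ) '' D`: the action defining isomorphism classes. -/
instance : MulAction (Equiv.Perm α) (List α) where
  smul φ l := l.map φ
  one_smul := List.map_id
  mul_smul φ ψ l := (List.map_map (f := ψ) (g := φ) (l := l)).symm

variable {D : Set (List α)} {l : List α} {a : α} (φ : Equiv.Perm α)

lemma Equiv.Perm.smul_list_def : φ • l = l.map φ := rfl

lemma Equiv.Perm.eq_of_smul_eq {φ ψ : Equiv.Perm α} (hl : ∀ a, a ∈ l) (h : φ • l = ψ • l) :
    φ = ψ :=
  Equiv.ext fun a => List.map_inj_left.1 h a (hl a)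

lemma TerminalElt.smul (h : TerminalElt D a) : TerminalElt (φ • D) (φ a) :=
  let ⟨l, hl, e⟩ := h
  ⟨φ • l, Set.smul_mem_smul_set hl, by simp [Equiv.Perm.smul_list_def, e]⟩

lemma terminalElt_smul_iff : TerminalElt (φ • D) (φ a) ↔ TerminalElt D a :=
  ⟨fun h => by simpa using h.smul φ⁻¹, fun h => h.smul φ⟩

lemma IsExtremal.smul (h : IsExtremal D l) : IsExtremal (φ • D) (φ • l) := by
  obtain ⟨hl, s, t, hst, hs, ht, hsT, htT, hterm⟩ := h
  refine ⟨Set.smul_mem_smul_set hl, φ s, φ t, φ.injective.ne hst,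
    by simp [Equiv.Perm.smul_list_def, hs], by simp [Equiv.Perm.smul_list_def, ht],
    hsT.smul φ, htT.smul φ, fun a ha => ?_⟩
  obtain ⟨b, rfl⟩ := φ.surjective a
  simpa using hterm b ((terminalElt_smul_iff φ).1 ha)

lemma isExtremal_smul_iff : IsExtremal (φ • D) (φ • l) ↔ IsExtremal D l :=
  ⟨fun h => by simpa using h.smul φ⁻¹, fun h => h.smul φ⟩

variable [DecidableEq α] {A T : Finset α} {b c : α}

lemma IsLinOrd.smul (h : IsLinOrd A l) : IsLinOrd (φ • A) (φ • l) := by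
  refine ⟨h.1.map φ.injective, fun a => ?_⟩
  obtain ⟨b, rfl⟩ := φ.surjective a
  rw [Equiv.Perm.smul_list_def, List.mem_map_of_injective φ.injective, ← Equiv.Perm.smul_def,
    smul_mem_smul_finset_iff, h.2]

lemma restrictList_smul (l : List α) (S : Finset α) :
    restrictList (φ • l) (φ • S) = φ • restrictList l S := by
  simp only [restrictList, Equiv.Perm.smul_list_def, List.filter_map]
  congr 2
  ext x
  simp [← Equiv.Perm.smul_def, smul_mem_smul_finset_iff]

lemma contraction_smul (D : Set (List α)) (S : Finset α) :
    contraction (φ • D) (φ • S) = φ • contraction D S := by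
  change (restrictList · (φ • S)) '' ((φ • ·) '' D) = (φ • ·) '' ((restrictList · S) '' D)
  simp only [Set.image_image, restrictList_smul]

lemma IsCondorcetCycle.smul (h : IsCondorcetCycle D a b c) :
    IsCondorcetCycle (φ • D) (φ a) (φ b) (φ c) := by
  obtain ⟨hab, hac, hbc, h₁, h₂, h₃⟩ := h
  have hT : ({φ a, φ b, φ c} : Finset α) = φ • {a, b, c} := by
    simp [smul_finset_insert, smul_finset_singleton]
  simp only [IsCondorcetCycle, hT, contraction_smul]
  exact ⟨φ.injective.ne hab, φ.injective.ne hac, φ.injective.ne hbc, Set.smul_mem_smul_set h₁,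
    Set.smul_mem_smul_set h₂, Set.smul_mem_smul_set h₃⟩

lemma condorcetTriple_smul_iff : CondorcetTriple (φ • D) ↔ CondorcetTriple D := by
  have key : ∀ (ψ : Equiv.Perm α) (D : Set (List α)), CondorcetTriple D → CondorcetTriple (ψ • D) :=
    fun ψ D h => by
      obtain ⟨a, b, c, hc⟩ := condorcetTriple_iff.1 h
      exact condorcetTriple_iff.2 ⟨_, _, _, hc.smul ψ⟩
  exact ⟨fun h => by simpa using key φ⁻¹ _ h, key φ D⟩

lemma IsCondorcetDomain.smul (h : IsCondorcetDomain A D) : IsCondorcetDomain (φ • A) (φ • D) :=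
  ⟨by rintro _ ⟨l, hl, rfl⟩; exact (h.1 l hl).smul φ, (condorcetTriple_smul_iff φ).not.2 h.2⟩

lemma IsMaxCondorcetDomain.smul (h : IsMaxCondorcetDomain A D) :
    IsMaxCondorcetDomain (φ • A) (φ • D) := by
  refine ⟨h.1.smul φ, fun D' hD' hsub => ?_⟩
  rw [← h.2 (φ⁻¹ • D') (by simpa using hD'.smul φ⁻¹)
    (Set.smul_set_subset_iff_subset_inv_smul_set.1 hsub), smul_inv_smul]

lemma NeverBottom.smul {x : α} (h : NeverBottom D T x) : NeverBottom (φ • D) (φ • T) (φ x) := by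
  refine ⟨smul_mem_smul_finset h.1, ?_⟩
  rintro _ ⟨l, hl, rfl⟩
  change (restrictList (φ • l) (φ • T)).getLast? ≠ _
  rw [restrictList_smul, Equiv.Perm.smul_list_def, List.getLast?_map]
  simpa using h.2 l hl

lemma IsArrowSP.smul (h : IsArrowSP A D) : IsArrowSP (φ • A) (φ • D) := by
  refine ⟨h.1.smul φ, fun T hT hT3 => ?_⟩
  obtain ⟨x, hx⟩ := h.2 (φ⁻¹ • T) (by simpa using smul_finset_subset_smul_finset (a := φ⁻¹) hT)
    (by rwa [card_smul_finset])
  exact ⟨φ x, by simpa using hx.smul φ⟩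

lemma IsMaxArrowSP.smul (h : IsMaxArrowSP A D) : IsMaxArrowSP (φ • A) (φ • D) :=
  ⟨h.1.smul φ, h.2.smul φ⟩

lemma SelfPaired.smul (h : SelfPaired D) : SelfPaired (φ • D) := by
  obtain ⟨P, Q, θ, hPQ, hP, hQ, hext, hθ : θ • P = Q, hθD : θ • D = D⟩ := h
  refine ⟨φ • P, φ • Q, φ * θ * φ⁻¹, (MulAction.injective φ).ne hPQ, hP.smul φ, hQ.smul φ,
    fun l hl => ?_, ?_, ?_⟩
  · rw [← smul_inv_smul φ l, isExtremal_smul_iff] at hl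
    rcases hext _ hl with h | h
    exacts [.inl (by rw [← h, smul_inv_smul]), .inr (by rw [← h, smul_inv_smul])]
  · change (φ * θ * φ⁻¹) • φ • P = φ • Q
    simp [mul_smul, hθ]
  · change (φ * θ * φ⁻¹) • φ • D = φ • D
    simp [mul_smul, hθD]

end Relabelling

lemma Set.ncard_add_ncard_eq_two_mul_of_fibers {β γ : Type*} {s : Set β} {t u : Set γ}
    (hs : s.Finite) (ht : t.Finite) (f : β → γ) (hf : Set.MapsTo f s t) (hu : u ⊆ t)
    (h₁ : ∀ y ∈ u, {x ∈ s | f x = y}.ncard = 1)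
    (h₂ : ∀ y ∈ t, y ∉ u → {x ∈ s | f x = y}.ncard = 2) :
    s.ncard + u.ncard = 2 * t.ncard := by
  classical
  lift u to Finset γ using ht.subset hu
  lift t to Finset γ using ht
  lift s to Finset β using hs
  replace hu : u ⊆ t := Finset.coe_subset.1 hu
  simp only [Set.ncard_coe_finset]
  have hfib : ∀ y ∈ t, #{x ∈ s | f x = y} = if y ∈ u then 1 else 2 := fun y hy => by
    rw [← Set.ncard_coe_finset, coe_filter]
    split_ifs with h
    exacts [h₁ y h, h₂ y hy h]
  have hu' : #u = ∑ y ∈ t, if y ∈ u then 1 else 0 := by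
    rw [sum_boole, Nat.cast_id, filter_mem_eq_inter, Finset.inter_eq_right.2 hu]
  rw [card_eq_sum_card_fiberwise hf, sum_congr rfl hfib, hu', ← sum_add_distrib,
    sum_congr rfl (g := fun _ => 2) fun y _ => by split_ifs <;> rfl, sum_const, smul_eq_mul,
    mul_comm]

section Counting

open MulAction

variable {α : Type*} [DecidableEq α] {A : Finset α} {D : Set (List α)} {l P Q : List α}

lemma IsArrowSP.selfPaired_iff (hD : IsArrowSP A D) (hP : IsExtremal D P) (hQ : IsExtremal D Q)
    (hPQ : P ≠ Q) : SelfPaired D ↔ ∃ θ : Equiv.Perm α, θ • P = Q ∧ θ • D = D := by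
  refine ⟨?_, fun ⟨θ, hθ, hθD⟩ =>
    ⟨P, Q, θ, hPQ, hP, hQ, fun l hl => hD.eq_or_eq_of_isExtremal hP hQ hPQ hl, hθ, hθD⟩⟩
  rintro ⟨P₀, Q₀, θ, hne, hP₀, hQ₀, -, hθ : θ • P₀ = Q₀, hθD : θ • D = D⟩
  rcases hD.eq_or_eq_of_isExtremal hP hQ hPQ hP₀ with rfl | rfl
  · obtain rfl := (hD.eq_or_eq_of_isExtremal hP₀ hQ hPQ hQ₀).resolve_left hne.symm
    exact ⟨θ, hθ, hθD⟩
  · obtain rfl := (hD.eq_or_eq_of_isExtremal hP hP₀ hPQ hQ₀).resolve_right hne.symm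
    exact ⟨θ⁻¹, inv_smul_eq_iff.2 hθ.symm, inv_smul_eq_iff.2 hθD.symm⟩

variable [Fintype α]

lemma exists_perm_smul_eq {l' : List α} (hl : IsLinOrd univ l) (hl' : IsLinOrd univ l') :
    ∃ φ : Equiv.Perm α, φ • l = l' := by
  have hlen : l.length = l'.length := by rw [hl.length_eq, hl'.length_eq]
  let e := List.Nodup.getEquivOfForallMemList l hl.1 hl.mem_of_univ
  let e' := List.Nodup.getEquivOfForallMemList l' hl'.1 hl'.mem_of_univ
  refine ⟨e.symm.trans ((finCongr hlen).trans e'),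
    List.ext_getElem (by simpa [Equiv.Perm.smul_list_def] using hlen) ?_⟩
  intro i hi hi'
  simp only [Equiv.Perm.smul_list_def, List.getElem_map]
  change e' (finCongr hlen (e.symm (e ⟨i, by simpa [Equiv.Perm.smul_list_def] using hi⟩))) = _
  simp [e']

lemma setOf_isLinOrd_finite (A : Finset α) : {l : List α | IsLinOrd A l}.Finite :=
  (List.finite_length_eq α #A).subset fun _ hl => hl.length_eq

lemma setOf_isMaxArrowSP_finite (A : Finset α) : {D : Set (List α) | IsMaxArrowSP A D}.Finite :=
  (setOf_isLinOrd_finite A).finite_subsets.subset fun _ hD => hD.isLinOrd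

variable {e : List α} {φ ψ : Equiv.Perm α}

def maxArrowSPWithExtremal (e : List α) : Set (Set (List α)) :=
  {D | IsMaxArrowSP univ D ∧ IsExtremal D e}

variable (α) in
def isoClasses : Set (Set (Set (List α))) :=
  {C | ∃ D : Set (List α), IsMaxArrowSP univ D ∧ C = orbit (Equiv.Perm α) D}

variable (α) in
def selfPairedIsoClasses : Set (Set (Set (List α))) :=
  {C | ∃ D : Set (List α), IsMaxArrowSP univ D ∧ SelfPaired D ∧ C = orbit (Equiv.Perm α) D}

lemma isoClasses_finite : (isoClasses α).Finite :=
  ((setOf_isMaxArrowSP_finite univ).image (orbit _)).subset fun _ ⟨D, hD, hC⟩ => ⟨D, hD, hC.symm⟩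

lemma selfPairedIsoClasses_subset : selfPairedIsoClasses α ⊆ isoClasses α :=
  fun _ ⟨D, hD, _, hC⟩ => ⟨D, hD, hC⟩

lemma IsMaxArrowSP.setOf_isExtremal_orbit_eq (hD : IsMaxArrowSP univ D) (hP : IsExtremal D P)
    (hQ : IsExtremal D Q) (hPQ : P ≠ Q) (hφ : φ • P = e) (hψ : ψ • Q = e) :
    {D' ∈ maxArrowSPWithExtremal e | orbit (Equiv.Perm α) D' = orbit (Equiv.Perm α) D} =
      {φ • D, ψ • D} := by
  ext D'
  simp only [maxArrowSPWithExtremal, Set.mem_ofPred_eq, Set.mem_insert_iff,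
    Set.mem_singleton_iff]
  constructor
  · rintro ⟨⟨-, he⟩, horb⟩
    obtain ⟨χ, rfl⟩ := mem_orbit_iff.1 (orbit_eq_iff.1 horb)
    rw [← smul_inv_smul χ e, isExtremal_smul_iff] at he
    rcases hD.2.eq_or_eq_of_isExtremal hP hQ hPQ he with h | h
    · exact .inl (congrArg (· • D) (Equiv.Perm.eq_of_smul_eq (hD.isLinOrd _ hP.1).mem_of_univ
        (by rw [hφ, ← h, smul_inv_smul])))
    · exact .inr (congrArg (· • D) (Equiv.Perm.eq_of_smul_eq (hD.isLinOrd _ hQ.1).mem_of_univ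
        (by rw [hψ, ← h, smul_inv_smul])))
  · rintro (rfl | rfl)
    · exact ⟨⟨by simpa using hD.smul φ, hφ ▸ hP.smul φ⟩, orbit_smul φ D⟩
    · exact ⟨⟨by simpa using hD.smul ψ, hψ ▸ hQ.smul ψ⟩, orbit_smul ψ D⟩

lemma IsMaxArrowSP.smul_eq_smul_iff_selfPaired (hD : IsMaxArrowSP univ D) (hP : IsExtremal D P)
    (hQ : IsExtremal D Q) (hPQ : P ≠ Q) (hφ : φ • P = e) (hψ : ψ • Q = e) :
    φ • D = ψ • D ↔ SelfPaired D := by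
  rw [hD.2.selfPaired_iff hP hQ hPQ]
  refine ⟨fun h => ⟨ψ⁻¹ * φ, by rw [mul_smul, hφ, ← hψ, inv_smul_smul],
    by rw [mul_smul, h, inv_smul_smul]⟩, fun ⟨θ, hθ, hθD⟩ => ?_⟩
  have : ψ * θ = φ := Equiv.Perm.eq_of_smul_eq (hD.isLinOrd _ hP.1).mem_of_univ
    (by rw [mul_smul, hθ, hψ, hφ])
  rw [← this, mul_smul, hθD]

lemma IsMaxArrowSP.orbit_mem_selfPairedIsoClasses_iff (hD : IsMaxArrowSP univ D) :
    orbit (Equiv.Perm α) D ∈ selfPairedIsoClasses α ↔ SelfPaired D := by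
  refine ⟨fun ⟨D₀, _, h₀, horb⟩ => ?_, fun h => ⟨D, hD, h, rfl⟩⟩
  obtain ⟨χ, rfl⟩ := mem_orbit_iff.1 (orbit_eq_iff.1 horb)
  exact h₀.smul χ

lemma IsMaxArrowSP.exists_setOf_isExtremal_orbit_eq (hD : IsMaxArrowSP univ D)
    (hα : 2 ≤ Fintype.card α) (he : IsLinOrd univ e) :
    ∃ D₁ D₂, {D' ∈ maxArrowSPWithExtremal e |
      orbit (Equiv.Perm α) D' = orbit (Equiv.Perm α) D} = {D₁, D₂} ∧
      (D₁ = D₂ ↔ SelfPaired D) := by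
  obtain ⟨P, Q, hPQ, hP, hQ⟩ := hD.exists_isExtremal_pair (by simpa using hα)
  obtain ⟨φ, hφ⟩ := exists_perm_smul_eq (hD.isLinOrd _ hP.1) he
  obtain ⟨ψ, hψ⟩ := exists_perm_smul_eq (hD.isLinOrd _ hQ.1) he
  exact ⟨φ • D, ψ • D, hD.setOf_isExtremal_orbit_eq hP hQ hPQ hφ hψ,
    hD.smul_eq_smul_iff_selfPaired hP hQ hPQ hφ hψ⟩

/-- Each isomorphism class contains one domain with extremal order `e` if it is self-paired
and two otherwise. -/
theorem ncard_maxArrowSPWithExtremal_add_ncard_selfPairedIsoClasses (hα : 2 ≤ Fintype.card α)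
    (he : IsLinOrd univ e) :
    (maxArrowSPWithExtremal e).ncard + (selfPairedIsoClasses α).ncard =
      2 * (isoClasses α).ncard := by
  refine Set.ncard_add_ncard_eq_two_mul_of_fibers
    ((setOf_isMaxArrowSP_finite univ).subset fun D hD => hD.1) isoClasses_finite _
    (fun D hD => ⟨D, hD.1, rfl⟩) selfPairedIsoClasses_subset ?_ ?_
  · rintro _ ⟨D, hD, hsp, rfl⟩
    obtain ⟨D₁, D₂, hfib, h₁₂⟩ := hD.exists_setOf_isExtremal_orbit_eq hα he
    rw [hfib, h₁₂.2 hsp, Set.pair_eq_singleton, Set.ncard_singleton]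
  · rintro _ ⟨D, hD, rfl⟩ hsp
    obtain ⟨D₁, D₂, hfib, h₁₂⟩ := hD.exists_setOf_isExtremal_orbit_eq hα he
    rw [hfib, Set.ncard_pair fun h => hsp (hD.orbit_mem_selfPairedIsoClasses_iff.2 (h₁₂.1 h))]

lemma ncard_selfPairedIsoClasses_le : (selfPairedIsoClasses α).ncard ≤ (isoClasses α).ncard :=
  Set.ncard_le_ncard selfPairedIsoClasses_subset isoClasses_finite

end Counting

section ThreeElements

open MulAction

variable {α : Type*} [DecidableEq α] [Fintype α] {D : Set (List α)} {a b c : α}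

variable (α) in
def neverLast (b : α) : Set (List α) :=
  {l | IsLinOrd univ l ∧ l.getLast? ≠ some b}

lemma insert_eq_univ_of_card_eq_three (hα : Fintype.card α = 3) (hab : a ≠ b) (hac : a ≠ c)
    (hbc : b ≠ c) : ({a, b, c} : Finset α) = univ :=
  eq_univ_of_card _ (by rw [card_eq_three.2 ⟨a, b, c, hab, hac, hbc, rfl⟩, hα])

lemma isCondorcetDomain_neverLast (hα : Fintype.card α = 3) (b : α) :
    IsCondorcetDomain univ (neverLast α b) := by
  refine ⟨fun l hl => hl.1, fun hCT => ?_⟩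
  obtain ⟨x, y, z, hc⟩ := condorcetTriple_iff.1 hCT
  have hT := insert_eq_univ_of_card_eq_three hα hc.1 hc.2.1 hc.2.2.1
  obtain ⟨-, -, -, ⟨v₁, h₁, e₁⟩, ⟨v₂, h₂, e₂⟩, ⟨v₃, h₃, e₃⟩⟩ := hc
  simp only [hT, restrictList_univ] at e₁ e₂ e₃
  have hb : b ∈ ({x, y, z} : Finset α) := hT ▸ mem_univ b
  simp only [mem_insert, mem_singleton] at hb
  rcases hb with rfl | rfl | rfl
  exacts [h₂.2 (by simp [e₂]), h₃.2 (by simp [e₃]), h₁.2 (by simp [e₁])]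

lemma isMaxArrowSP_neverLast (hα : Fintype.card α = 3) (b : α) :
    IsMaxArrowSP univ (neverLast α b) := by
  have hCD := isCondorcetDomain_neverLast hα b
  refine ⟨⟨hCD, fun D' hD' hsub => Set.Subset.antisymm (fun l hl => ?_) hsub⟩, hCD, ?_⟩
  · refine ⟨hD'.1 l hl, fun hlb => hD'.2 ?_⟩
    obtain ⟨x, y, z, rfl⟩ :=
      List.length_eq_three.1 (by rw [(hD'.1 l hl).length_eq, card_univ, hα])
    obtain rfl : z = b := by simpa using hlb
    obtain ⟨⟨hxy, hxz⟩, hyz⟩ : (x ≠ y ∧ x ≠ z) ∧ y ≠ z := by simpa using (hD'.1 _ hl).1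
    have hT := insert_eq_univ_of_card_eq_three hα hxy hxz hyz
    have h₂ : [y, z, x] ∈ D' :=
      hsub ⟨(hD'.1 _ hl).perm ((List.rotate_perm [x, y, z] 1).symm), by simpa using hxz⟩
    have h₃ : [z, x, y] ∈ D' :=
      hsub ⟨(hD'.1 _ hl).perm ((List.rotate_perm [x, y, z] 2).symm), by simpa using hyz⟩
    refine condorcetTriple_iff.2 ⟨x, y, z, hxy, hxz, hyz, ?_, ?_, ?_⟩ <;>
      simp only [contraction, hT, restrictList_univ, Set.image_id']
    exacts [hl, h₂, h₃]
  · intro T _ hT3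
    obtain rfl : T = univ := eq_univ_of_card T (by rw [hT3, hα])
    refine ⟨b, mem_univ b, fun l hl => ?_⟩
    rw [restrictList_univ]
    exact hl.2

lemma smul_neverLast (φ : Equiv.Perm α) (b : α) : φ • neverLast α b = neverLast α (φ b) := by
  ext l
  rw [Set.mem_smul_set_iff_inv_smul_mem]
  obtain ⟨l, rfl⟩ : ∃ l', φ • l' = l := ⟨φ⁻¹ • l, smul_inv_smul φ l⟩
  refine and_congr ⟨fun h => by simpa using h.smul φ, fun h => by simpa using h.smul φ⁻¹⟩ ?_
  simp [Equiv.Perm.smul_list_def, List.getLast?_map]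

lemma orbit_neverLast (b b' : α) :
    orbit (Equiv.Perm α) (neverLast α b) = orbit (Equiv.Perm α) (neverLast α b') := by
  rw [← orbit_smul (Equiv.swap b b') (neverLast α b'), smul_neverLast, Equiv.swap_apply_right]

lemma IsMaxArrowSP.exists_eq_neverLast (hα : Fintype.card α = 3) (hD : IsMaxArrowSP univ D) :
    ∃ b, D = neverLast α b := by
  obtain ⟨b, -, hb⟩ := hD.2.2 univ subset_rfl (by rw [card_univ, hα])
  refine ⟨b, (hD.1.2 _ (isCondorcetDomain_neverLast hα b)
    fun l hl => ⟨hD.isLinOrd l hl, ?_⟩).symm⟩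
  simpa [restrictList_univ] using hb l hl

/-- With `univ = {a, b, c}`, the extremal orders of `neverLast α b` are `[a, b, c]` and
`[c, b, a]`, exchanged by the transposition of `a` and `c`. -/
lemma selfPaired_neverLast (hab : a ≠ b) (hac : a ≠ c) (hbc : b ≠ c)
    (huniv : (univ : Finset α) = {a, b, c}) : SelfPaired (neverLast α b) := by
  have hα : Fintype.card α = 3 := by
    rw [← card_univ, huniv, card_eq_three.2 ⟨a, b, c, hab, hac, hbc, rfl⟩]
  have hP : [a, b, c] ∈ neverLast α b :=
    ⟨⟨by simp [hab, hac, hbc], fun x => by simp [huniv]⟩, by simpa using hbc.symm⟩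
  have hQ : [c, b, a] ∈ neverLast α b :=
    ⟨hP.1.perm (List.reverse_perm _).symm, by simpa using hab⟩
  have hterm : ∀ x, TerminalElt (neverLast α b) x → x = a ∨ x = c := by
    rintro x ⟨l, hl, hlx⟩
    have hx : x ∈ ({a, b, c} : Finset α) := huniv ▸ mem_univ x
    simp only [mem_insert, mem_singleton] at hx
    rcases hx with hx | rfl | hx
    exacts [.inl hx, absurd hlx hl.2, .inr hx]
  have hPe : IsExtremal (neverLast α b) [a, b, c] :=
    ⟨hP, a, c, hac, rfl, rfl, ⟨_, hQ, rfl⟩, ⟨_, hP, rfl⟩, hterm⟩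
  have hQe : IsExtremal (neverLast α b) [c, b, a] :=
    ⟨hQ, c, a, hac.symm, rfl, rfl, ⟨_, hP, rfl⟩, ⟨_, hQ, rfl⟩, fun x hx => (hterm x hx).symm⟩
  rw [(isMaxArrowSP_neverLast hα b).2.selfPaired_iff hPe hQe (by simp [hac])]
  refine ⟨Equiv.swap a c, ?_, by rw [smul_neverLast, Equiv.swap_apply_of_ne_of_ne hab.symm hbc]⟩
  simp [Equiv.Perm.smul_list_def, Equiv.swap_apply_of_ne_of_ne hab.symm hbc]

theorem ncard_isoClasses_of_card_eq_three (hα : Fintype.card α = 3) :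
    (isoClasses α).ncard = 1 := by
  obtain ⟨a, b, c, hab, hac, hbc, huniv⟩ := card_eq_three.1 (card_univ.trans hα)
  refine Set.ncard_eq_one.2 ⟨orbit (Equiv.Perm α) (neverLast α b), Set.ext fun C => ⟨?_, ?_⟩⟩
  · rintro ⟨D, hD, rfl⟩
    obtain ⟨b', rfl⟩ := hD.exists_eq_neverLast hα
    exact orbit_neverLast b' b
  · rintro rfl
    exact ⟨_, isMaxArrowSP_neverLast hα b, rfl⟩

theorem ncard_selfPairedIsoClasses_of_card_eq_three (hα : Fintype.card α = 3) :
    (selfPairedIsoClasses α).ncard = 1 := by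
  obtain ⟨a, b, c, hab, hac, hbc, huniv⟩ := card_eq_three.1 (card_univ.trans hα)
  refine Set.ncard_eq_one.2 ⟨orbit (Equiv.Perm α) (neverLast α b), Set.ext fun C => ⟨?_, ?_⟩⟩
  · rintro ⟨D, hD, -, rfl⟩
    obtain ⟨b', rfl⟩ := hD.exists_eq_neverLast hα
    exact orbit_neverLast b' b
  · rintro rfl
    exact ⟨_, isMaxArrowSP_neverLast hα b, selfPaired_neverLast hab hac hbc huniv, rfl⟩

end ThreeElements

/-- `N(3) = SP(3) = 1`, and for `m ≥ 4`: `N(m) = (P(m) + SP(m)) / 2`, hence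
`P(m)/2 ≤ N(m) ≤ P(m)`. -/
theorem stmt_16 :
    numIsoClasses 3 = 1 ∧ numSPClasses 3 = 1 ∧
    ∀ m : ℕ, 4 ≤ m →
      2 * numIsoClasses m = numMaxASP m + numSPClasses m ∧
      numMaxASP m ≤ 2 * numIsoClasses m ∧
      numIsoClasses m ≤ numMaxASP m := by
  refine ⟨ncard_isoClasses_of_card_eq_three (Fintype.card_fin 3),
    ncard_selfPairedIsoClasses_of_card_eq_three (Fintype.card_fin 3), fun m hm => ?_⟩
  have hcount : numMaxASP m + numSPClasses m = 2 * numIsoClasses m :=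
    ncard_maxArrowSPWithExtremal_add_ncard_selfPairedIsoClasses (by rw [Fintype.card_fin]; omega)
      ⟨List.nodup_finRange m, fun a => iff_of_true (List.mem_finRange a) (mem_univ a)⟩
  have hle : numSPClasses m ≤ numIsoClasses m := ncard_selfPairedIsoClasses_le
  omega
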